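/- arXiv:1605.04385 — 5 statements merged into one kernel-verified Lean document; each statement's English description precedes it below -/
import Mathlib

section
/- Under Assumption A2, in any Knight–Walras equilibrium (ψ, (ĉ^i)) in which markets clear exactly, i.e. ∑_i ĉ^i = ∑_i e^i, the following no-arbitrage condition holds: 𝔼[ψ(ĉ^i − e^i)] = 0 for every agent i. -/
open Finset MeasureTheory

/-- A probability vector on a finite state space `Ω`. -/
def IsProb {Ω : Type*} [Fintype Ω] (P : Ω → ℝ) : Prop :=
  (∀ ω, 0 ≤ P ω) ∧ ∑ ω, P ω = 1

/-- A set of priors: nonempty, compact, convex set of probability vectors. -/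
def IsPriorSet {Ω : Type*} [Fintype Ω] (𝒬 : Set (Ω → ℝ)) : Prop :=
  𝒬.Nonempty ∧ IsCompact 𝒬 ∧ Convex ℝ 𝒬 ∧ ∀ P ∈ 𝒬, IsProb P

/-- Linear expectation `E^P X = ∑ ω, P ω * X ω`. -/
noncomputable def lexp {Ω : Type*} [Fintype Ω] (P X : Ω → ℝ) : ℝ := ∑ ω, P ω * X ω

/-- Knightian (sublinear) expectation `𝔼 X = max_{P ∈ 𝒬} E^P X`. -/
noncomputable def kexp {Ω : Type*} [Fintype Ω] (𝒬 : Set (Ω → ℝ)) (X : Ω → ℝ) : ℝ :=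
  sSup ((fun P => lexp P X) '' 𝒬)

/-- Minimal expectation `min_{P ∈ 𝒬} E^P X` (multiple-prior utility building block). -/
noncomputable def minexp {Ω : Type*} [Fintype Ω] (𝒬 : Set (Ω → ℝ)) (X : Ω → ℝ) : ℝ :=
  sInf ((fun P => lexp P X) '' 𝒬)

/-- A plan is `𝒬`-ambiguity-free in mean if its expectation is the same under all priors. -/
def AmbFree {Ω : Type*} [Fintype Ω] (𝒬 : Set (Ω → ℝ)) (ξ : Ω → ℝ) : Prop :=
  ∃ c : ℝ, ∀ Q ∈ 𝒬, lexp Q ξ = c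

/-- Knight–Walras budget set `B(ψ, e) = {c ∈ 𝕏₊ : 𝔼[ψ(c − e)] ≤ 0}`. -/
def budget {Ω : Type*} [Fintype Ω] (𝒬 : Set (Ω → ℝ)) (ψ e : Ω → ℝ) : Set (Ω → ℝ) :=
  {c | (∀ ω, 0 ≤ c ω) ∧ kexp 𝒬 (fun ω => ψ ω * (c ω - e ω)) ≤ 0}

/-- Knight–Walras equilibrium: nonnegative state price, feasibility, budget-optimality. -/
def KWEq {Ω : Type*} [Fintype Ω] {I : ℕ} (𝒬 : Set (Ω → ℝ)) (e : Fin I → Ω → ℝ)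
    (U : Fin I → (Ω → ℝ) → ℝ) (ψ : Ω → ℝ) (c : Fin I → Ω → ℝ) : Prop :=
  (∀ ω, 0 ≤ ψ ω) ∧
  (∀ ω, ∑ i, (c i ω - e i ω) ≤ 0) ∧
  ∀ i, c i ∈ budget 𝒬 ψ (e i) ∧
    ∀ d : Ω → ℝ, (∀ ω, 0 ≤ d ω) → U i (c i) < U i d → d ∉ budget 𝒬 ψ (e i)

/-- Assumption A2: strictly positive endowments; continuous, concave, monotone,
locally non-satiated utilities on the nonnegative orthant. -/
def A2 {Ω : Type*} [Fintype Ω] {I : ℕ} (e : Fin I → Ω → ℝ)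
    (U : Fin I → (Ω → ℝ) → ℝ) : Prop :=
  (∀ i ω, 0 < e i ω) ∧
  (∀ i, ContinuousOn (U i) {x : Ω → ℝ | ∀ ω, 0 ≤ x ω}) ∧
  (∀ i, ConcaveOn ℝ {x : Ω → ℝ | ∀ ω, 0 ≤ x ω} (U i)) ∧
  (∀ i, ∀ x y : Ω → ℝ, (∀ ω, 0 ≤ y ω) → (∀ ω, y ω ≤ x ω) → U i y ≤ U i x) ∧
  (∀ i, ∀ c : Ω → ℝ, (∀ ω, 0 ≤ c ω) → ∀ ε > 0, ∃ d : Ω → ℝ,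
      (∀ ω, 0 ≤ d ω) ∧ dist d c < ε ∧ U i c < U i d)

/-- In a Knight–Walras equilibrium with exact market clearing, the
no-arbitrage condition holds and each agent's budget is exactly exhausted. -/
theorem knight_walras_no_arbitrage
    {Ω : Type*} [Fintype Ω] [Nonempty Ω] {I : ℕ} (hI : 1 ≤ I)
    (𝒬 : Set (Ω → ℝ)) (h𝒬 : IsPriorSet 𝒬)
    (e : Fin I → Ω → ℝ) (U : Fin I → (Ω → ℝ) → ℝ) (hA2 : A2 e U)
    (ψ : Ω → ℝ) (c : Fin I → Ω → ℝ) (hKW : KWEq 𝒬 e U ψ c)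
    (hclear : ∀ ω, ∑ i, c i ω = ∑ i, e i ω) :
    kexp 𝒬 (fun ω => ψ ω * ∑ i, (c i ω - e i ω)) =
        ∑ i, kexp 𝒬 (fun ω => ψ ω * (c i ω - e i ω)) ∧
    ∀ i, kexp 𝒬 (fun ω => ψ ω * (c i ω - e i ω)) = 0 := by
  obtain ⟨h𝒬ne, h𝒬cpt, h𝒬cvx, h𝒬prob⟩ := h𝒬
  obtain ⟨hψ, hfeas, hopt⟩ := hKW
  obtain ⟨hepos, hcontU, hconc, hmono, hlns⟩ := hA2
  have hcontP : ∀ X : Ω → ℝ, Continuous (fun P : Ω → ℝ => lexp P X) := by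
    intro X
    unfold lexp
    exact continuous_finset_sum _ fun ω _ => (continuous_apply ω).mul continuous_const
  have hbdd : ∀ X : Ω → ℝ, BddAbove ((fun P => lexp P X) '' 𝒬) :=
    fun X => (h𝒬cpt.image (hcontP X)).bddAbove
  have hne : ∀ X : Ω → ℝ, ((fun P => lexp P X) '' 𝒬).Nonempty :=
    fun X => h𝒬ne.image _
  -- each agent's budget constraint binds
  have hmain : ∀ i, kexp 𝒬 (fun ω => ψ ω * (c i ω - e i ω)) = 0 := by
    intro i
    obtain ⟨⟨hc0, hbudg⟩, hoptI⟩ := hopt i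
    rcases lt_or_eq_of_le hbudg with hlt | heq
    · exfalso
      set K := kexp 𝒬 (fun ω => ψ ω * (c i ω - e i ω)) with hK
      set M := ∑ ω, ψ ω with hM
      have hM0 : 0 ≤ M := Finset.sum_nonneg fun ω _ => hψ ω
      have hεpos : 0 < -K / (M + 1) := div_pos (by linarith) (by linarith)
      obtain ⟨d, hd0, hdist, hUd⟩ := hlns i (c i) hc0 _ hεpos
      apply hoptI d hd0 hUd
      refine ⟨hd0, ?_⟩
      have hbound : ∀ x ∈ (fun P => lexp P (fun ω => ψ ω * (d ω - e i ω))) '' 𝒬,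
          x ≤ K + (-K / (M + 1)) * M := by
        rintro x ⟨P, hP, rfl⟩
        obtain ⟨hP0, hP1⟩ := h𝒬prob P hP
        have hPle : ∀ ω, P ω ≤ 1 := by
          intro ω
          calc P ω ≤ ∑ ω', P ω' :=
                Finset.single_le_sum (fun ω' _ => hP0 ω') (Finset.mem_univ ω)
            _ = 1 := hP1
      -- split the expectation
        have hsplit : lexp P (fun ω => ψ ω * (d ω - e i ω))
            = lexp P (fun ω => ψ ω * (c i ω - e i ω))
              + ∑ ω, P ω * (ψ ω * (d ω - c i ω)) := by
          unfold lexp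
          rw [← Finset.sum_add_distrib]
          apply Finset.sum_congr rfl
          intro ω _
          ring
        have hterm : ∀ ω, P ω * (ψ ω * (d ω - c i ω)) ≤ ψ ω * (-K / (M + 1)) := by
          intro ω
          have hd : d ω - c i ω ≤ -K / (M + 1) := by
            have h1 : dist (d ω) (c i ω) ≤ dist d (c i) := dist_le_pi_dist d (c i) ω
            have h2 : |d ω - c i ω| ≤ dist d (c i) := by rwa [Real.dist_eq] at h1
            have := le_trans (le_abs_self _) h2
            linarith
          have hψω := hψ ω
          have hP0ω := hP0 ω
          have hP1ω := hPle ω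
          nlinarith [mul_le_mul_of_nonneg_left hd (mul_nonneg hP0ω hψω),
            mul_le_mul_of_nonneg_right hP1ω (mul_nonneg hψω hεpos.le)]
        have hsum : ∑ ω, P ω * (ψ ω * (d ω - c i ω)) ≤ (-K / (M + 1)) * M := by
          calc ∑ ω, P ω * (ψ ω * (d ω - c i ω)) ≤ ∑ ω, ψ ω * (-K / (M + 1)) :=
                Finset.sum_le_sum fun ω _ => hterm ω
            _ = (-K / (M + 1)) * M := by rw [← Finset.sum_mul, hM]; ring
        have hle : lexp P (fun ω => ψ ω * (c i ω - e i ω)) ≤ K :=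
          le_csSup (hbdd _) ⟨P, hP, rfl⟩
        linarith [hsplit, hsum, hle]
      have hks : kexp 𝒬 (fun ω => ψ ω * (d ω - e i ω)) ≤ K + (-K / (M + 1)) * M :=
        csSup_le (hne _) hbound
      have hkey : K + (-K / (M + 1)) * M ≤ 0 := by
        have hM1 : (0:ℝ) < M + 1 := by linarith
        have : K + (-K / (M + 1)) * M = K / (M + 1) := by field_simp; ring
        rw [this]
        exact le_of_lt (div_neg_of_neg_of_pos hlt hM1)
      linarith
    · exact heq
  -- the aggregate excess demand is zero
  have hzero : (fun ω => ψ ω * ∑ i, (c i ω - e i ω)) = fun _ => (0:ℝ) := by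
    funext ω
    have : ∑ i, (c i ω - e i ω) = 0 := by
      rw [Finset.sum_sub_distrib, hclear ω, sub_self]
    rw [this, mul_zero]
  have hkzero : kexp 𝒬 (fun ω => ψ ω * ∑ i, (c i ω - e i ω)) = 0 := by
    rw [hzero]
    have himg : (fun P => lexp P (fun _ => (0:ℝ))) '' 𝒬 = {0} := by
      apply Set.eq_singleton_iff_nonempty_unique_mem.mpr
      refine ⟨hne _, ?_⟩
      rintro x ⟨P, hP, rfl⟩
      simp [lexp]
    unfold kexp
    rw [himg, csSup_singleton]
  refine ⟨?_, hmain⟩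
  rw [hkzero]
  symm
  simp [hmain]
end

section
/- Fix a prior P ∈ 𝒫 and suppose Assumption A2 holds. Let (ψ, (c^i)) be an Arrow–Debreu equilibrium for the single-prior economy with prior {P}. If the value of each agent's net demand, ξ^i = ψ(c^i − e^i), is 𝒫-ambiguity-free in mean for all i, then (ψ, (c^i)) is a Knight–Walras equilibrium for the economy with prior set 𝒫. -/
open Finset MeasureTheory

lemma kexp_singleton {Ω : Type*} [Fintype Ω] (P X : Ω → ℝ) :
    kexp {P} X = lexp P X := by
  simp [kexp, Set.image_singleton, csSup_singleton]

lemma lexp_le_kexp {Ω : Type*} [Fintype Ω] {𝒬 : Set (Ω → ℝ)} (hc : IsCompact 𝒬)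
    {P : Ω → ℝ} (hP : P ∈ 𝒬) (X : Ω → ℝ) : lexp P X ≤ kexp 𝒬 X := by
  apply le_csSup
  · exact (hc.image (by continuity : Continuous fun P : Ω → ℝ => lexp P X)).bddAbove
  · exact ⟨P, hP, rfl⟩

/-- If an Arrow–Debreu equilibrium for the single-prior economy `{P}`
has all net demand values 𝒬-ambiguity-free in mean, then it is a Knight–Walras
equilibrium for the economy with prior set 𝒬. -/
theorem arrow_debreu_to_knight_walras
    {Ω : Type*} [Fintype Ω] [Nonempty Ω] {I : ℕ} (hI : 1 ≤ I)
    (𝒬 : Set (Ω → ℝ)) (h𝒬 : IsPriorSet 𝒬) (P : Ω → ℝ) (hP : P ∈ 𝒬)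
    (e : Fin I → Ω → ℝ) (U : Fin I → (Ω → ℝ) → ℝ) (hA2 : A2 e U)
    (ψ : Ω → ℝ) (c : Fin I → Ω → ℝ)
    (hAD : KWEq {P} e U ψ c)
    (hamb : ∀ i, AmbFree 𝒬 (fun ω => ψ ω * (c i ω - e i ω))) :
    KWEq 𝒬 e U ψ c := by
  obtain ⟨hψ, hfeas, hopt⟩ := hAD
  refine ⟨hψ, hfeas, fun i => ?_⟩
  obtain ⟨⟨hci, hbud⟩, hmax⟩ := hopt i
  rw [kexp_singleton] at hbud
  obtain ⟨k, hk⟩ := hamb i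
  constructor
  · refine ⟨hci, ?_⟩
    have : ∀ Q ∈ 𝒬, lexp Q (fun ω => ψ ω * (c i ω - e i ω)) = lexp P (fun ω => ψ ω * (c i ω - e i ω)) := by
      intro Q hQ; rw [hk Q hQ, hk P hP]
    have himg : (fun Q => lexp Q (fun ω => ψ ω * (c i ω - e i ω))) '' 𝒬 = {lexp P (fun ω => ψ ω * (c i ω - e i ω))} := by
      apply Set.eq_singleton_iff_nonempty_unique_mem.mpr
      exact ⟨⟨_, P, hP, rfl⟩, fun x ⟨Q, hQ, hx⟩ => hx ▸ this Q hQ⟩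
    rw [kexp, himg, csSup_singleton]
    exact hbud
  · intro d hd hU hdbud
    refine hmax d hd hU ⟨hd, ?_⟩
    rw [kexp_singleton]
    exact le_trans (lexp_le_kexp h𝒬.2.1 hP _) hdbud.2
end

section
/- Let ξ^1, …, ξ^I ∈ 𝕏 satisfy ∑_{i=1}^I ξ^i = 0 and 𝔼ξ^i = 0 for every i. Then 𝔼(−ξ^i) = 0 for every i, and consequently each ξ^i is 𝒫-ambiguity-free in mean with E^Q ξ^i = 0 for all Q ∈ 𝒫. -/
open Finset MeasureTheory

/-- If plans ξ¹,…,ξᴵ sum to zero and each has Knightian expectation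
zero, then each has 𝔼(−ξⁱ) = 0 and each ξⁱ is ambiguity-free in mean with
expectation 0 under every prior. -/
theorem zero_sum_zero_kexp_ambiguity_free
    {Ω : Type*} [Fintype Ω] [Nonempty Ω] {I : ℕ}
    (𝒬 : Set (Ω → ℝ)) (h𝒬 : IsPriorSet 𝒬)
    (ξ : Fin I → Ω → ℝ)
    (hsum : ∀ ω, ∑ i, ξ i ω = 0)
    (hE : ∀ i, kexp 𝒬 (ξ i) = 0) :
    (∀ i, kexp 𝒬 (fun ω => -ξ i ω) = 0) ∧
    (∀ i, ∀ Q ∈ 𝒬, lexp Q (ξ i) = 0) := by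
  obtain ⟨hne, hcpt, hconv, hprob⟩ := h𝒬
  have hcont : ∀ X : Ω → ℝ, Continuous fun P : Ω → ℝ => lexp P X := by
    intro X
    exact continuous_finset_sum _ fun ω _ => (continuous_apply ω).mul continuous_const
  have hbdd : ∀ X : Ω → ℝ, BddAbove ((fun P => lexp P X) '' 𝒬) := fun X =>
    (hcpt.image (hcont X)).bddAbove
  have hle : ∀ i, ∀ Q ∈ 𝒬, lexp Q (ξ i) ≤ 0 := by
    intro i Q hQ
    have := le_csSup (hbdd (ξ i)) (Set.mem_image_of_mem _ hQ)
    rw [← hE i]; exact this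
  have key : ∀ i, ∀ Q ∈ 𝒬, lexp Q (ξ i) = 0 := by
    intro i Q hQ
    have hsum0 : ∑ j, lexp Q (ξ j) = 0 := by
      simp only [lexp]
      rw [Finset.sum_comm]
      simp [← Finset.mul_sum, hsum]
    have := (Finset.sum_eq_zero_iff_of_nonpos (fun j _ => hle j Q hQ)).mp hsum0
    exact this i (Finset.mem_univ i)
  refine ⟨fun i => ?_, key⟩
  have himg : (fun P => lexp P (fun ω => -ξ i ω)) '' 𝒬 = {0} := by
    apply Set.eq_singleton_iff_nonempty_unique_mem.mpr
    refine ⟨hne.image _, ?_⟩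
    rintro x ⟨Q, hQ, rfl⟩
    have := key i Q hQ
    simp only [lexp] at this ⊢
    simp only [mul_neg, Finset.sum_neg_distrib, this, neg_zero]
  rw [kexp, himg, csSup_singleton]
end

section
/- Let (ψ, (c^i)) be a Knight–Walras equilibrium of the Knightian economy with prior set 𝒫. Then the allocation (c^i) is uncertainty-neutral efficient given ψ and 𝔼: there is no feasible allocation (d^i) (i.e. ∑_i (d^i − e^i) ≤ 0, d^i ∈ 𝕏₊) such that each value of net trade η^i = ψ(d^i − e^i) is 𝒫-ambiguity-free in mean and U^i(d^i) > U^i(c^i) for all i. -/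
open Finset MeasureTheory

/-- Knight–Walras equilibrium allocations are uncertainty-neutral
efficient: no feasible allocation with ambiguity-free-in-mean net trade values
makes every agent strictly better off. -/
theorem knight_walras_uncertainty_neutral_efficient
    {Ω : Type*} [Fintype Ω] [Nonempty Ω] {I : ℕ} (hI : 1 ≤ I)
    (𝒬 : Set (Ω → ℝ)) (h𝒬 : IsPriorSet 𝒬)
    (e : Fin I → Ω → ℝ) (U : Fin I → (Ω → ℝ) → ℝ)
    (ψ : Ω → ℝ) (c : Fin I → Ω → ℝ) (hKW : KWEq 𝒬 e U ψ c) :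
    ¬ ∃ d : Fin I → Ω → ℝ,
        (∀ i ω, 0 ≤ d i ω) ∧
        (∀ ω, ∑ i, (d i ω - e i ω) ≤ 0) ∧
        (∀ i, AmbFree 𝒬 (fun ω => ψ ω * (d i ω - e i ω))) ∧
        (∀ i, U i (c i) < U i (d i)) := by
  rintro ⟨d, hd0, hfeas, hamb, hbetter⟩
  obtain ⟨⟨P0, hP0⟩, _, _, hprob⟩ := h𝒬
  -- for each i, get the constant value of net trade
  choose v hv using hamb
  -- kexp of net trade equals v i, and is > 0 since d i is not in budget
  have hpos : ∀ i, 0 < v i := by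
    intro i
    have hnb := (hKW.2.2 i).2 (d i) (hd0 i) (hbetter i)
    have hk : kexp 𝒬 (fun ω => ψ ω * (d i ω - e i ω)) = v i := by
      have : ((fun P => lexp P (fun ω => ψ ω * (d i ω - e i ω))) '' 𝒬) = {v i} := by
        apply Set.eq_singleton_iff_nonempty_unique_mem.2
        constructor
        · exact ⟨_, P0, hP0, hv i P0 hP0⟩
        · rintro x ⟨Q, hQ, rfl⟩; exact hv i Q hQ
      rw [kexp, this, csSup_singleton]
    by_contra h
    push_neg at h
    exact hnb ⟨hd0 i, by rw [hk]; exact h⟩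
  -- pick any prior P0 and compute the expectation of the total net trade value
  have hsum : ∑ i, v i = lexp P0 (fun ω => ψ ω * ∑ i, (d i ω - e i ω)) := by
    have : ∀ i ∈ Finset.univ, v i = lexp P0 (fun ω => ψ ω * (d i ω - e i ω)) := by
      intro i _; exact (hv i P0 hP0).symm
    rw [Finset.sum_congr rfl this]
    unfold lexp
    rw [Finset.sum_comm]
    congr 1; ext ω
    simp only [Finset.mul_sum]
  have hneg : lexp P0 (fun ω => ψ ω * ∑ i, (d i ω - e i ω)) ≤ 0 := by
    apply Finset.sum_nonpos
    intro ω _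
    have h1 : ψ ω * ∑ i, (d i ω - e i ω) ≤ 0 :=
      mul_nonpos_of_nonneg_of_nonpos (hKW.1 ω) (hfeas ω)
    exact mul_nonpos_of_nonneg_of_nonpos ((hprob P0 hP0).1 ω) h1
  have : 0 < ∑ i, v i := Finset.sum_pos (fun i _ => hpos i) ⟨⟨0, hI⟩, Finset.mem_univ _⟩
  linarith [hsum ▸ this]
end

section
/- If the set of priors is the full simplex, 𝒫 = Δ (all probability vectors on Ω), and the state price ψ is strictly positive, then the Knight–Walras budget set equals the order interval below the endowment: B(ψ, e) = {c ∈ 𝕏₊ : c(ω) ≤ e(ω) for all ω ∈ Ω}. -/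
open Finset MeasureTheory

/-- If the prior set is the full simplex and the state price is
strictly positive, the Knight–Walras budget set is the order interval below the
endowment. -/
theorem budget_full_simplex
    {Ω : Type*} [Fintype Ω] [Nonempty Ω]
    (ψ e : Ω → ℝ) (hψ : ∀ ω, 0 < ψ ω) (he : ∀ ω, 0 ≤ e ω) :
    budget {P : Ω → ℝ | IsProb P} ψ e =
      {c : Ω → ℝ | (∀ ω, 0 ≤ c ω) ∧ ∀ ω, c ω ≤ e ω} := by
  classical
  ext c
  set X : Ω → ℝ := fun ω => ψ ω * (c ω - e ω) with hX
  have hbdd : BddAbove ((fun P => lexp P X) '' {P : Ω → ℝ | IsProb P}) := by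
    refine ⟨∑ ω, |X ω|, ?_⟩
    rintro _ ⟨P, hP, rfl⟩
    calc lexp P X = ∑ ω, P ω * X ω := rfl
      _ ≤ ∑ ω, |X ω| := by
          apply Finset.sum_le_sum
          intro ω _
          calc P ω * X ω ≤ P ω * |X ω| :=
                mul_le_mul_of_nonneg_left (le_abs_self _) (hP.1 ω)
            _ ≤ 1 * |X ω| := by
                apply mul_le_mul_of_nonneg_right _ (abs_nonneg _)
                calc P ω = ∑ ω' ∈ {ω}, P ω' := by simp
                  _ ≤ ∑ ω', P ω' := Finset.sum_le_sum_of_subset_of_nonneg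
                      (Finset.subset_univ _) (fun i _ _ => hP.1 i)
                  _ = 1 := hP.2
            _ = |X ω| := one_mul _
  constructor
  · rintro ⟨hc, hk⟩
    refine ⟨hc, fun ω => ?_⟩
    have hdirac : IsProb (fun ω' => if ω' = ω then (1:ℝ) else 0) := by
      constructor
      · intro ω'; dsimp only; split <;> norm_num
      · simp
    have hle : X ω ≤ kexp {P : Ω → ℝ | IsProb P} X := by
      have : lexp (fun ω' => if ω' = ω then (1:ℝ) else 0) X = X ω := by
        simp [lexp, Finset.sum_ite_eq']
      rw [← this]
      exact le_csSup hbdd ⟨_, hdirac, rfl⟩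
    have hXω : ψ ω * (c ω - e ω) ≤ 0 := hle.trans hk
    nlinarith [hψ ω]
  · rintro ⟨hc, hle⟩
    refine ⟨hc, ?_⟩
    apply Real.sSup_le _ le_rfl
    rintro _ ⟨P, hP, rfl⟩
    apply Finset.sum_nonpos
    intro ω _
    exact mul_nonpos_of_nonneg_of_nonpos (hP.1 ω)
      (mul_nonpos_of_nonneg_of_nonpos (hψ ω).le (by linarith [hle ω]))
end
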